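/- arXiv:2308.11065 — 6 statements merged into one kernel-verified Lean document; each statement's English description precedes it below -/
import Mathlib

section
/- Let B^+ be a complete discrete valuation ring with uniformizer t, fraction field B, and residue field C, and let V be a finite-dimensional vector space over a field L with a fixed embedding L → B^+ making C an L-algebra. Let 𝓛 ⊆ V ⊗_L B be a B^+-lattice, and define the induced filtration F^i(V_C) as the image of (t^i 𝓛) ∩ (V ⊗_L B^+) in V_C = V ⊗_L C. If the filtration is trivial, i.e. F^0(V_C) = V_C and F^1(V_C) = 0, then 𝓛 = V ⊗_L B^+. -/
/-!
Nakayama's lemma turns `F⁰ = V_C`, which gives `L0 ≤ 𝓛 ⊔ t • L0`, into `L0 ≤ 𝓛`.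
Conversely, every `x ∈ 𝓛` has some `t ^ k • x ∈ L0`, and `F¹ = 0` lets us cancel one factor
of `t` at a time while staying in `𝓛`, so `x ∈ L0`.
-/

open Pointwise

namespace Submodule

variable {R M : Type*} [CommRing R] [AddCommGroup M] [Module R M]

theorem le_of_le_sup_smul_of_mem_jacobson_bot {t : R} (ht : t ∈ (⊥ : Ideal R).jacobson)
    {N N' : Submodule R M} (hN' : N'.FG) (h : N' ≤ N ⊔ t • N') : N' ≤ N :=
  le_of_le_smul_of_le_jacobson_bot hN' ((Ideal.span_singleton_le_iff_mem _).mpr ht)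
    (by rwa [ideal_span_singleton_smul])

theorem mem_of_pow_smul_mem {t : R} (ht : IsSMulRegular M t) {L N : Submodule R M}
    (h : t • L ⊓ N ≤ t • N) {x : M} (hx : x ∈ L) {k : ℕ} (hk : t ^ k • x ∈ N) :
    x ∈ N := by
  induction k with
  | zero => simpa using hk
  | succ k ih =>
    refine ih ?_
    have hmem : t • t ^ k • x ∈ t • L ⊓ N :=
      ⟨smul_mem_pointwise_smul _ t L (L.smul_mem _ hx), by rwa [smul_smul, ← pow_succ']⟩
    obtain ⟨y, hy, hyx⟩ := (mem_smul_pointwise_iff_exists _ _ _).mp (h hmem)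
    exact ht hyx ▸ hy

end Submodule

theorem IsLocalization.exists_smul_mem_of_mem_span {R A M : Type*} [CommRing R] [CommRing A]
    [Algebra R A] (S : Submonoid R) [IsLocalization S A] [AddCommGroup M] [Module R M]
    [Module A M] [IsScalarTower R A M] {N : Submodule R M} {x : M}
    (hx : x ∈ Submodule.span A (N : Set M)) : ∃ s ∈ S, s • x ∈ N := by
  induction hx using Submodule.span_induction with
  | mem y hy => exact ⟨1, S.one_mem, by simpa using hy⟩
  | zero => exact ⟨1, S.one_mem, by simp⟩
  | add y z _ _ hy hz =>
    obtain ⟨s, hs, hsy⟩ := hy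
    obtain ⟨s', hs', hs'z⟩ := hz
    refine ⟨s * s', S.mul_mem hs hs', ?_⟩
    rw [smul_add, mul_comm, mul_smul, mul_comm, mul_smul]
    exact N.add_mem (N.smul_mem _ hsy) (N.smul_mem _ hs'z)
  | smul b y _ hy =>
    obtain ⟨s, hs, hsy⟩ := hy
    obtain ⟨⟨a, s'⟩, hb⟩ := IsLocalization.surj S b
    refine ⟨s' * s, S.mul_mem s'.2 hs, ?_⟩
    have : (s' * s) • b • y = a • s • y :=
      calc (s' * s) • b • y = (b * algebraMap R A s') • s • y := by
            rw [smul_comm, mul_smul, mul_smul, algebraMap_smul]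
        _ = a • s • y := by rw [hb, algebraMap_smul]
    rw [this]
    exact N.smul_mem _ hsy

theorem IsDiscreteValuationRing.exists_pow_smul_mem_of_mem_span {R K M : Type*} [CommRing R]
    [IsDomain R] [IsDiscreteValuationRing R] [Field K] [Algebra R K] [IsFractionRing R K]
    [AddCommGroup M] [Module R M] [Module K M] [IsScalarTower R K M] {ϖ : R} (hϖ : Irreducible ϖ)
    {N : Submodule R M} {x : M} (hx : x ∈ Submodule.span K (N : Set M)) :
    ∃ k : ℕ, ϖ ^ k • x ∈ N := by
  obtain ⟨s, hs, hsx⟩ := IsLocalization.exists_smul_mem_of_mem_span (nonZeroDivisors R) hx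
  obtain ⟨k, u, rfl⟩ := eq_unit_mul_pow_irreducible (nonZeroDivisors.ne_zero hs) hϖ
  refine ⟨k, ?_⟩
  have := N.smul_mem (↑u⁻¹ : R) hsx
  rwa [smul_smul, ← mul_assoc, Units.inv_mul, one_mul] at this

/-- `L0` is the standard lattice `V ⊗_L B⁺` and `V_C = L0 / t • L0`, so `F⁰ = V_C` reads
`(𝓛 ⊓ L0) ⊔ t • L0 = L0` and `F¹ = 0` reads `(t • 𝓛) ⊓ L0 ≤ t • L0`. -/
theorem lattice_trivial_of_trace_filtration_trivial_general
    {Bp B W : Type*} [CommRing Bp] [IsDomain Bp] [IsDiscreteValuationRing Bp]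
    [Field B] [Algebra Bp B] [IsFractionRing Bp B]
    [AddCommGroup W] [Module B W] [Module Bp W] [IsScalarTower Bp B W]
    (t : Bp) (ht : Irreducible t)
    (L0 𝓛 : Submodule Bp W)
    (hL0 : L0.FG ∧ Submodule.span B (L0 : Set W) = ⊤)
    (hF0 : (𝓛 ⊓ L0) ⊔ (t • L0) = L0)
    (hF1 : (t • 𝓛) ⊓ L0 ≤ t • L0) :
    𝓛 = L0 := by
  have hL0_le : L0 ≤ 𝓛 :=
    Submodule.le_of_le_sup_smul_of_mem_jacobson_bot
      (IsLocalRing.maximalIdeal_le_jacobson _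
        ((IsLocalRing.mem_maximalIdeal t).mpr ht.not_isUnit))
      hL0.1 (hF0.ge.trans (sup_le_sup_right inf_le_left _))
  have ht_reg : IsSMulRegular W t := by
    have := Module.IsTorsionFree.trans_faithfulSMul Bp B W
    exact Module.IsTorsionFree.isSMulRegular (IsRegular.of_ne_zero ht.ne_zero)
  refine le_antisymm (fun x hx => ?_) hL0_le
  obtain ⟨k, hk⟩ :=
    IsDiscreteValuationRing.exists_pow_smul_mem_of_mem_span (K := B) ht (by rw [hL0.2]; trivial)
  exact Submodule.mem_of_pow_smul_mem ht_reg hF1 hx hk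

/-- If the Bialynicki–Birula (trace) filtration induced by a `B⁺`-lattice `𝓛` on `V_C` is
trivial (`F⁰ V_C = V_C` and `F¹ V_C = 0`), then `𝓛` is the trivial lattice `V ⊗ B⁺`.
Here `B⁺` is a complete DVR with uniformizer `t` and fraction field `B`; `L0` plays the
role of the standard lattice `V ⊗_L B⁺` in `V ⊗_L B`, `V_C = L0 / t·L0`, and the
filtration conditions are expressed at the level of submodules: `F⁰ = V_C` says
`(𝓛 ⊓ L0) + t•L0 = L0`, and `F¹ = 0` says `(t•𝓛) ⊓ L0 ≤ t•L0`. -/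
theorem lattice_trivial_of_trace_filtration_trivial
    {Bp B W : Type*} [CommRing Bp] [IsDomain Bp] [IsDiscreteValuationRing Bp]
    [IsAdicComplete (IsLocalRing.maximalIdeal Bp) Bp]
    [Field B] [Algebra Bp B] [IsFractionRing Bp B]
    [AddCommGroup W] [Module B W] [Module Bp W] [IsScalarTower Bp B W]
    (t : Bp) (ht : Irreducible t)
    (L0 𝓛 : Submodule Bp W)
    (hL0 : L0.FG ∧ Submodule.span B (L0 : Set W) = ⊤)
    (h𝓛 : 𝓛.FG ∧ Submodule.span B (𝓛 : Set W) = ⊤)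
    (hF0 : (𝓛 ⊓ L0) ⊔ (t • L0) = L0)
    (hF1 : (t • 𝓛) ⊓ L0 ≤ t • L0) :
    𝓛 = L0 :=
  lattice_trivial_of_trace_filtration_trivial_general t ht L0 𝓛 hL0 hF0 hF1
end

section
/- Let B^+ be a complete DVR with uniformizer t and fraction field B. Let 0 → S → V → Q → 0 be a strict exact sequence of bilatticed B-vector spaces: i.e., S ⊆ V is a B-subspace with induced lattices 𝓛_i(S) = 𝓛_i(V) ∩ S, Q = V/S with quotient lattices, and the sequence of underlying vector spaces is exact. If the type of S ⊕ Q (as a multiset of elementary divisor exponents of the pair of lattices) is [μ] and the type of V is [ν], then [μ] ≤ [ν] in the dominance order: for every k, the sum of the k largest entries of [μ] is at most the sum of the k largest entries of [ν], with equality of total sums. -/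
/-!
For a lattice pair `(L₁, L₂)` of type `ν`, the `B⁺`-module `L₁ / (L₁ ∩ L₂)` is
`⊕ᵢ B⁺ / t^{νᵢ⁺}`, of length `∑ᵢ νᵢ⁺`. The maps `S → V → Q` induce maps between these quotients
for `S`, `V` and `Q` which are injective, resp. surjective, with zero composite, so the lengths
for `S` and `Q` add up to at most the one for `V`. Replacing `L₂` by `t^{-m} L₂`, and swapping
the two lattices, gives `∑ (μᵢ - m)⁺ ≤ ∑ (νᵢ - m)⁺` and `∑ (m - μᵢ)⁺ ≤ ∑ (m - νᵢ)⁺` for every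
integer `m`. Taking `m = ν_K` bounds the `K`-th partial sum, and `m` outside the range of `ν`
gives the equality of the totals.
-/

/-- `(W, L1, L2)` has type `ν = (ν₁, …, νₙ)`: there is a simultaneous `B`-basis `b` of `W`
with `L1` the `R`-span of the `bᵢ` and `L2` the `R`-span of the `t^{νᵢ}·bᵢ`
(Smith normal form / elementary divisors). -/
def LatticePairHasType {R B W : Type*} [CommRing R] [Field B] [Algebra R B]
    [AddCommGroup W] [Module B W] [Module R W] [IsScalarTower R B W]
    (t : R) {n : ℕ} (ν : Fin n → ℤ) (L1 L2 : Submodule R W) : Prop :=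
  ∃ b : Module.Basis (Fin n) B W,
    L1 = Submodule.span R (Set.range b) ∧
    L2 = Submodule.span R (Set.range fun i => ((algebraMap R B t) ^ (ν i)) • b i)

open Submodule
open scoped Pointwise

theorem Module.length_add_length_le_of_comp_eq_zero {R M N P : Type*} [Ring R]
    [AddCommGroup M] [Module R M] [AddCommGroup N] [Module R N] [AddCommGroup P] [Module R P]
    (f : N →ₗ[R] M) (g : M →ₗ[R] P) (hf : Function.Injective f) (hg : Function.Surjective g)
    (hgf : g ∘ₗ f = 0) : length R N + length R P ≤ length R M := by
  rw [length_eq_add_of_exact f (LinearMap.range f).mkQ hf (LinearMap.range f).mkQ_surjective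
    (LinearMap.exact_map_mkQ_range f)]
  gcongr
  refine length_le_of_surjective
    ((LinearMap.range f).liftQ g (LinearMap.range_le_ker_iff.mpr hgf)) ?_
  rw [← LinearMap.range_eq_top, range_liftQ, LinearMap.range_eq_top.mpr hg]

namespace Submodule

section RelLength

variable {R M N P : Type*} [Ring R] [AddCommGroup M] [Module R M] [AddCommGroup N] [Module R N]
  [AddCommGroup P] [Module R P]

/-- The length of `K ⧸ (H ⊓ K)`, with the argument order of `Subgroup.relIndex`. -/
noncomputable def relLength (H K : Submodule R M) : ℕ∞ :=
  Module.length R (K ⧸ H.comap K.subtype)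

theorem relLength_comap_add_relLength_map_le {f : N →ₗ[R] M} {g : M →ₗ[R] P}
    (hgf : g ∘ₗ f = 0) (H K : Submodule R M) :
    (H.comap f).relLength (K.comap f) + (H.map g).relLength (K.map g) ≤ H.relLength K := by
  refine Module.length_add_length_le_of_comp_eq_zero
    (mapQ _ _ (f.restrict fun _ hx => hx) fun _ hx => by simpa using hx)
    (mapQ _ _ (g.restrict fun _ => mem_map_of_mem) fun _ hx => by
      simpa using mem_map_of_mem (f := g) hx) ?_ ?_ ?_
  · refine (injective_iff_map_eq_zero _).mpr fun x hx => ?_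
    induction x using Submodule.Quotient.induction_on with | H x => ?_
    rw [mapQ_apply, Quotient.mk_eq_zero] at hx
    rw [Quotient.mk_eq_zero]
    simpa using hx
  · intro y
    induction y using Submodule.Quotient.induction_on with | H y => ?_
    obtain ⟨_, ⟨x, hx, rfl⟩⟩ := y
    exact ⟨Quotient.mk ⟨x, hx⟩, rfl⟩
  · ext x
    have hx : g (f x) = 0 := LinearMap.congr_fun hgf x
    simp [hx]

end RelLength

section Pointwise

variable {R α M N : Type*} [CommSemiring R] [AddCommMonoid M] [Module R M]
  [AddCommMonoid N] [Module R N]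

theorem mem_pointwise_smul_iff_inv_smul_mem₀ [GroupWithZero α] [DistribMulAction α M]
    [SMulCommClass α R M] {a : α} (ha : a ≠ 0) (L : Submodule R M) (x : M) :
    x ∈ a • L ↔ a⁻¹ • x ∈ L :=
  Set.mem_smul_set_iff_inv_smul_mem₀ ha (L : Set M) x

theorem map_restrictScalars_pointwise_smul [Semiring α] [Algebra R α] [Module α M]
    [IsScalarTower R α M] [Module α N] [IsScalarTower R α N] (f : M →ₗ[α] N) (a : α)
    (L : Submodule R M) :
    (a • L).map (f.restrictScalars R) = a • L.map (f.restrictScalars R) := by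
  rw [pointwise_smul_def, pointwise_smul_def, ← map_comp, ← map_comp]
  congr 1
  ext x
  simp

theorem comap_restrictScalars_pointwise_smul [DivisionRing α] [Algebra R α] [Module α M]
    [IsScalarTower R α M] [Module α N] [IsScalarTower R α N] (f : M →ₗ[α] N) {a : α}
    (ha : a ≠ 0) (L : Submodule R N) :
    (a • L).comap (f.restrictScalars R) = a • L.comap (f.restrictScalars R) := by
  ext x
  simp [mem_pointwise_smul_iff_inv_smul_mem₀ ha]

end Pointwise

end Submodule

theorem IsDiscreteValuationRing.length_quotient_span_pow {R : Type*} [CommRing R] [IsDomain R]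
    [IsDiscreteValuationRing R] {t : R} (ht : Irreducible t) (k : ℕ) :
    Module.length R (R ⧸ Ideal.span {t ^ k}) = k := by
  rw [← Ideal.span_singleton_pow, ← ht.maximalIdeal_eq, length_quotient_pow_maximalIdeal]

theorem Module.Basis.mem_span_smul_iff {R B W ι : Type*} [CommSemiring R] [Semiring B]
    [Algebra R B] [AddCommMonoid W] [Module B W] [Module R W] [IsScalarTower R B W] [Fintype ι]
    (b : Module.Basis ι B W) (c : ι → B) (x : W) :
    x ∈ span R (Set.range fun i => c i • b i) ↔ ∀ i, b.repr x i ∈ span R {c i} := by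
  refine ⟨fun hx i => ?_, fun h => ?_⟩
  · induction hx using span_induction with
    | mem y hy =>
      obtain ⟨j, rfl⟩ := hy
      by_cases hij : i = j
      · simp [hij, mem_span_singleton_self]
      · simp [Ne.symm hij]
    | zero => simp
    | add y z _ _ hy hz => simpa using add_mem hy hz
    | smul r y _ hy =>
      rw [← algebraMap_smul B r y, map_smul, Finsupp.smul_apply, algebraMap_smul]
      exact smul_mem _ r hy
  · rw [← b.sum_repr x]
    refine sum_mem fun i _ => ?_
    obtain ⟨r, hr⟩ := mem_span_singleton.mp (h i)
    rw [← hr, smul_assoc]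
    exact smul_mem _ r (subset_span ⟨i, rfl⟩)

theorem algebraMap_mem_span_zpow_iff {R B : Type*} [CommRing R] [Field B]
    [Algebra R B] [IsFractionRing R B] {t : R} (ht : t ≠ 0) (r : R) (ν : ℤ) :
    algebraMap R B r ∈ span R {algebraMap R B t ^ ν} ↔ r ∈ Ideal.span {t ^ ν.toNat} := by
  rcases Int.eq_nat_or_neg ν with ⟨k, rfl | rfl⟩
  · simp only [zpow_natCast, Int.toNat_natCast, ← map_pow, mem_span_singleton,
      Algebra.smul_def, ← map_mul, (IsFractionRing.injective R B).eq_iff, Algebra.algebraMap_self,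
      RingHom.id_apply]
  · have hu : algebraMap R B t ≠ 0 := (map_ne_zero_iff _ (IsFractionRing.injective R B)).mpr ht
    simp only [Int.toNat_neg_natCast, pow_zero, Ideal.span_singleton_one, Submodule.mem_top,
      iff_true]
    refine mem_span_singleton.mpr ⟨r * t ^ k, ?_⟩
    rw [Algebra.smul_def, map_mul, map_pow, mul_assoc, zpow_neg, zpow_natCast,
      mul_inv_cancel₀ (pow_ne_zero k hu), mul_one]

namespace LatticePairHasType

variable {R B W : Type*} [CommRing R] [Field B] [Algebra R B]
  [AddCommGroup W] [Module B W] [Module R W] [IsScalarTower R B W]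
  {t : R} {n : ℕ} {ν : Fin n → ℤ} {L₁ L₂ : Submodule R W}

theorem swap (hu : algebraMap R B t ≠ 0) (h : LatticePairHasType (B := B) t ν L₁ L₂) :
    LatticePairHasType (B := B) t (-ν) L₂ L₁ := by
  obtain ⟨b, h₁, h₂⟩ := h
  have hw : ∀ i, IsUnit (algebraMap R B t ^ ν i) := fun i => (zpow_ne_zero _ hu).isUnit
  have hb : ⇑(b.isUnitSMul hw) = fun i => algebraMap R B t ^ ν i • b i :=
    funext (Module.Basis.isUnitSMul_apply hw)
  refine ⟨b.isUnitSMul hw, by rw [h₂, hb], ?_⟩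
  simp only [h₁, hb, smul_smul, ← zpow_add₀ hu, Pi.neg_apply, neg_add_cancel, zpow_zero,
    one_smul]

theorem smul_right (hu : algebraMap R B t ≠ 0) (h : LatticePairHasType (B := B) t ν L₁ L₂)
    (m : ℤ) :
    LatticePairHasType (B := B) t (fun i => ν i - m) L₁ (algebraMap R B t ^ (-m) • L₂) := by
  obtain ⟨b, h₁, h₂⟩ := h
  refine ⟨b, h₁, ?_⟩
  simp only [h₂, smul_span, Set.smul_set_range, smul_smul, ← zpow_add₀ hu, neg_add_eq_sub]

variable [IsDomain R] [IsDiscreteValuationRing R] [IsFractionRing R B]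

theorem relLength_eq (ht : Irreducible t) (h : LatticePairHasType (B := B) t ν L₁ L₂) :
    L₂.relLength L₁ = ∑ i, ((ν i).toNat : ℕ∞) := by
  obtain ⟨b, h₁, h₂⟩ := h
  -- the coordinates in `b` identify `L₁ ⧸ (L₁ ⊓ L₂)` with `Π i, R ⧸ (t ^ (ν i).toNat)`
  set φ := Fintype.linearCombination R (fun i => b i)
  have hφ : LinearMap.range φ = L₁ := h₁ ▸ Fintype.range_linearCombination R _
  set ψ : (Fin n → R) →ₗ[R] L₁ := φ.codRestrict _ fun r => hφ ▸ LinearMap.mem_range_self φ r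
  have hψ : Function.Surjective ψ := by
    rintro ⟨x, hx⟩
    obtain ⟨r, rfl⟩ := hφ.ge hx
    exact ⟨r, rfl⟩
  have hker : LinearMap.ker ((L₂.comap L₁.subtype).mkQ ∘ₗ ψ) =
      Submodule.pi Set.univ (fun i => Ideal.span {t ^ (ν i).toNat}) := by
    ext r
    have hrepr : ∀ i, b.repr (φ r) i = algebraMap R B (r i) := fun i => by
      simp only [φ, Fintype.linearCombination_apply, ← algebraMap_smul B (r _), b.repr_sum_self]
    simp only [LinearMap.ker_comp, ker_mkQ, mem_comap, subtype_apply, LinearMap.codRestrict_apply,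
      ψ, h₂, b.mem_span_smul_iff, hrepr, algebraMap_mem_span_zpow_iff ht.ne_zero, mem_pi,
      Set.mem_univ, true_imp_iff]
  let e := (((L₂.comap L₁.subtype).mkQ ∘ₗ ψ).quotKerEquivOfSurjective
    ((mkQ_surjective _).comp hψ)).symm ≪≫ₗ quotEquivOfEq _ _ hker ≪≫ₗ quotientPi _
  rw [relLength, e.length_eq, Module.length_pi_of_fintype]
  simp [IsDiscreteValuationRing.length_quotient_span_pow ht]

variable {N P : Type*} [AddCommGroup N] [Module B N] [Module R N] [IsScalarTower R B N]
  [AddCommGroup P] [Module B P] [Module R P] [IsScalarTower R B P]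
  {s q : ℕ} {σ : Fin s → ℤ} {τ : Fin q → ℤ}

theorem sum_toNat_add_sum_toNat_le (ht : Irreducible t) {f : N →ₗ[R] W} {g : W →ₗ[R] P}
    (hgf : g ∘ₗ f = 0)
    (hS : LatticePairHasType (B := B) t σ (L₁.comap f) (L₂.comap f))
    (hQ : LatticePairHasType (B := B) t τ (L₁.map g) (L₂.map g))
    (hV : LatticePairHasType (B := B) t ν L₁ L₂) :
    ∑ i, (σ i).toNat + ∑ i, (τ i).toNat ≤ ∑ i, (ν i).toNat := by
  have h := relLength_comap_add_relLength_map_le hgf L₂ L₁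
  rw [hS.relLength_eq ht, hQ.relLength_eq ht, hV.relLength_eq ht] at h
  exact_mod_cast h

theorem sum_posPart_sub_add_le (ht : Irreducible t) {f : N →ₗ[B] W} {g : W →ₗ[B] P}
    (hgf : g ∘ₗ f = 0)
    (hS : LatticePairHasType (B := B) t σ (L₁.comap (f.restrictScalars R))
      (L₂.comap (f.restrictScalars R)))
    (hQ : LatticePairHasType (B := B) t τ (L₁.map (g.restrictScalars R))
      (L₂.map (g.restrictScalars R)))
    (hV : LatticePairHasType (B := B) t ν L₁ L₂) (m : ℤ) :
    ∑ i, (σ i - m)⁺ + ∑ i, (τ i - m)⁺ ≤ ∑ i, (ν i - m)⁺ := by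
  have hu : algebraMap R B t ≠ 0 :=
    (map_ne_zero_iff _ (IsFractionRing.injective R B)).mpr ht.ne_zero
  have hz : algebraMap R B t ^ (-m) ≠ 0 := zpow_ne_zero _ hu
  have h := sum_toNat_add_sum_toNat_le ht
    (LinearMap.ext fun x => LinearMap.congr_fun hgf x :
      g.restrictScalars R ∘ₗ f.restrictScalars R = 0)
    (by rw [comap_restrictScalars_pointwise_smul _ hz]; exact hS.smul_right hu m)
    (by rw [map_restrictScalars_pointwise_smul]; exact hQ.smul_right hu m)
    (hV.smul_right hu m)
  have hcast : ∀ a : ℤ, (a.toNat : ℤ) = a⁺ := Int.toNat_eq_max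
  simpa [hcast] using (Int.ofNat_le.mpr h)

end LatticePairHasType

section Dominance

open Finset

variable {ι : Type*} [Fintype ι] {μ ν : ι → ℤ}

theorem sum_le_sum_of_sum_posPart_sub_le (A : Finset ι) {m : ℤ} (hA : ∀ i ∈ A, m ≤ ν i)
    (hAc : ∀ i ∉ A, ν i ≤ m) (h : ∑ i, (μ i - m)⁺ ≤ ∑ i, (ν i - m)⁺) :
    ∑ i ∈ A, μ i ≤ ∑ i ∈ A, ν i := by
  have hν : ∑ i, (ν i - m)⁺ = ∑ i ∈ A, (ν i - m) := by
    rw [← sum_subset A.subset_univ fun i _ hi => posPart_eq_zero.mpr (sub_nonpos.mpr (hAc i hi))]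
    exact sum_congr rfl fun i hi => posPart_eq_self.mpr (sub_nonneg.mpr (hA i hi))
  calc ∑ i ∈ A, μ i ≤ ∑ i ∈ A, (m + (μ i - m)⁺) :=
        sum_le_sum fun i _ => by linarith [le_posPart (μ i - m)]
    _ = #A • m + ∑ i ∈ A, (μ i - m)⁺ := by rw [sum_add_distrib, sum_const]
    _ ≤ #A • m + ∑ i, (μ i - m)⁺ := by
        gcongr
        exact A.subset_univ
    _ ≤ #A • m + ∑ i ∈ A, (ν i - m) := by rw [← hν]; gcongr
    _ = ∑ i ∈ A, ν i := by rw [sum_sub_distrib, sum_const]; abel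

theorem sum_eq_of_sum_posPart_sub_le (h : ∀ m, ∑ i, (μ i - m)⁺ ≤ ∑ i, (ν i - m)⁺)
    (h' : ∀ m, ∑ i, (m - μ i)⁺ ≤ ∑ i, (m - ν i)⁺) : ∑ i, μ i = ∑ i, ν i := by
  obtain ⟨a, ha⟩ := (Set.finite_range ν).bddBelow
  obtain ⟨b, hb⟩ := (Set.finite_range ν).bddAbove
  refine le_antisymm (sum_le_sum_of_sum_posPart_sub_le univ (fun i _ => ha ⟨i, rfl⟩)
    (by simp) (h a)) ?_
  have h_neg := sum_le_sum_of_sum_posPart_sub_le (μ := -μ) (ν := -ν) univ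
    (fun i _ => neg_le_neg (hb ⟨i, rfl⟩)) (by simp)
    (by simpa only [Pi.neg_apply, neg_sub_neg] using h' b)
  simpa using h_neg

theorem sum_filter_lt_le_of_sum_posPart_sub_le {n : ℕ} {μ ν : Fin n → ℤ} (hν : Antitone ν)
    (h : ∀ m, ∑ i, (μ i - m)⁺ ≤ ∑ i, (ν i - m)⁺) (K : ℕ) :
    ∑ i ∈ univ.filter (fun i : Fin n => (i : ℕ) < K), μ i ≤
      ∑ i ∈ univ.filter (fun i : Fin n => (i : ℕ) < K), ν i := by
  rcases Nat.eq_zero_or_pos (min K n) with hK | hK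
  · have hempty : univ.filter (fun i : Fin n => (i : ℕ) < K) = ∅ := by
      ext i
      simp only [mem_filter, mem_univ, true_and, notMem_empty, iff_false]
      omega
    simp [hempty]
  · let j : Fin n := ⟨min K n - 1, by omega⟩
    refine sum_le_sum_of_sum_posPart_sub_le _ (fun i hi => hν ?_) (fun i hi => hν ?_) (h (ν j))
    · simp only [mem_filter, mem_univ, true_and] at hi
      change (i : ℕ) ≤ min K n - 1
      omega
    · simp only [mem_filter, mem_univ, true_and] at hi
      change min K n - 1 ≤ (i : ℕ)
      omega

end Dominance

theorem type_dominance_of_strict_exact_general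
    {R B W : Type*} [CommRing R] [IsDomain R] [IsDiscreteValuationRing R]
    [Field B] [Algebra R B] [IsFractionRing R B]
    [AddCommGroup W] [Module B W] [Module R W] [IsScalarTower R B W]
    (t : R) (ht : Irreducible t)
    (S : Submodule B W)
    (𝓛₁ 𝓛₂ : Submodule R W)
    {s q nV : ℕ} (σ : Fin s → ℤ) (τ : Fin q → ℤ) (ν : Fin nV → ℤ) (μ : Fin nV → ℤ)
    (hνa : Antitone ν)
    (hS : LatticePairHasType (B := B) t σ (𝓛₁.comap (S.subtype.restrictScalars R))
        (𝓛₂.comap (S.subtype.restrictScalars R)))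
    (hQ : LatticePairHasType (B := B) t τ (Submodule.map (S.mkQ.restrictScalars R) 𝓛₁)
        (Submodule.map (S.mkQ.restrictScalars R) 𝓛₂))
    (hV : LatticePairHasType (B := B) t ν 𝓛₁ 𝓛₂)
    (hμ : Finset.univ.val.map μ = Finset.univ.val.map σ + Finset.univ.val.map τ) :
    (∀ K : ℕ,
        ∑ i ∈ Finset.univ.filter (fun i : Fin nV => (i : ℕ) < K), μ i ≤
        ∑ i ∈ Finset.univ.filter (fun i : Fin nV => (i : ℕ) < K), ν i) ∧
      (∑ i, μ i = ∑ i, ν i) := by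
  have hsplit (φ : ℤ → ℤ) : ∑ i, φ (μ i) = ∑ i, φ (σ i) + ∑ i, φ (τ i) := by
    have h := congrArg (fun M => (M.map φ).sum) hμ
    simp only [Multiset.map_map, Multiset.map_add, Multiset.sum_add] at h
    exact h
  have hu : algebraMap R B t ≠ 0 :=
    (map_ne_zero_iff _ (IsFractionRing.injective R B)).mpr ht.ne_zero
  have hgf : S.mkQ ∘ₗ S.subtype = 0 := by ext; simp
  have hI (m : ℤ) : ∑ i, (μ i - m)⁺ ≤ ∑ i, (ν i - m)⁺ :=
    (hsplit fun x => (x - m)⁺).trans_le (hS.sum_posPart_sub_add_le ht hgf hQ hV m)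
  have hII (m : ℤ) : ∑ i, (m - μ i)⁺ ≤ ∑ i, (m - ν i)⁺ := by
    rw [hsplit fun x => (m - x)⁺]
    simpa only [Pi.neg_apply, neg_sub_neg] using
      (hS.swap hu).sum_posPart_sub_add_le ht hgf (hQ.swap hu) (hV.swap hu) (-m)
  exact ⟨sum_filter_lt_le_of_sum_posPart_sub_le hνa hI, sum_eq_of_sum_posPart_sub_le hI hII⟩

/-- Dominance of types in strict exact sequences of bilatticed vector spaces: for a
`B`-subspace `S ⊆ W` with induced lattices, quotient `Q = W/S` with quotient lattices, if
`S` has type `σ`, `Q` has type `τ`, `W` has type `ν`, and `μ` is the (sorted) merge of `σ`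
and `τ` (the type of `S ⊕ Q`), then `μ ≤ ν` in the dominance order: every partial sum of
`μ` is at most the corresponding partial sum of `ν`, with equal total sums. -/
theorem type_dominance_of_strict_exact
    {R B W : Type*} [CommRing R] [IsDomain R] [IsDiscreteValuationRing R]
    [Field B] [Algebra R B] [IsFractionRing R B]
    [AddCommGroup W] [Module B W] [Module R W] [IsScalarTower R B W]
    (t : R) (ht : Irreducible t)
    (S : Submodule B W)
    (𝓛₁ 𝓛₂ : Submodule R W)
    (h₁ : 𝓛₁.FG ∧ Submodule.span B (𝓛₁ : Set W) = ⊤)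
    (h₂ : 𝓛₂.FG ∧ Submodule.span B (𝓛₂ : Set W) = ⊤)
    {s q nV : ℕ} (σ : Fin s → ℤ) (τ : Fin q → ℤ) (ν : Fin nV → ℤ) (μ : Fin nV → ℤ)
    (hσa : Antitone σ) (hτa : Antitone τ) (hνa : Antitone ν) (hμa : Antitone μ)
    (hS : LatticePairHasType (B := B) t σ (𝓛₁.comap (S.subtype.restrictScalars R))
        (𝓛₂.comap (S.subtype.restrictScalars R)))
    (hQ : LatticePairHasType (B := B) t τ (Submodule.map (S.mkQ.restrictScalars R) 𝓛₁)
        (Submodule.map (S.mkQ.restrictScalars R) 𝓛₂))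
    (hV : LatticePairHasType (B := B) t ν 𝓛₁ 𝓛₂)
    (hμ : Finset.univ.val.map μ = Finset.univ.val.map σ + Finset.univ.val.map τ) :
    (∀ K : ℕ,
        ∑ i ∈ Finset.univ.filter (fun i : Fin nV => (i : ℕ) < K), μ i ≤
        ∑ i ∈ Finset.univ.filter (fun i : Fin nV => (i : ℕ) < K), ν i) ∧
      (∑ i, μ i = ∑ i, ν i) :=
  type_dominance_of_strict_exact_general t ht S 𝓛₁ 𝓛₂ σ τ ν μ hνa hS hQ hV hμ
end

section
/- Let C be a field, K = GL_n(C[[t]]), and let μ = (μ_1 ≥ … ≥ μ_n) be a dominant cocharacter of the diagonal torus of GL_n, with t^μ = diag(t^{μ_1}, …, t^{μ_n}). Let u be an upper-triangular unipotent matrix in GL_n(C((t))). Then u · t^μ ∈ K t^μ K if and only if u ∈ GL_n(C[[t]]), i.e., all entries of u lie in C[[t]]. -/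
/-!
Take the minor of `u * t^μ` on the rows `{i} ∪ (j, n]` and the columns `[j, n]`: the matching
minor of `u` is upper unitriangular apart from its corner entry, so the minor equals
`u i j * t ^ (μ j + ⋯ + μ n)`. If `u * t^μ = a * t^μ * b` with `a`, `b` integral, expanding
the same minor of the right-hand side along the rows of `a` writes it as an integral
combination of the `t ^ (μ f₁ + ⋯ + μ f_k)` over injective `f`, and since `μ` is antitone
each such sum is at least `μ j + ⋯ + μ n`. Hence `u i j` is integral. Conversely an integral
`u` has determinant `1`, so it lies in `GL_n(C[[t]])` and `u * t^μ = u * t^μ * 1`.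
-/

open Finset Matrix

theorem Antitone.sum_Ici_le_sum {α β : Type*} [LinearOrder α] [LocallyFiniteOrderTop α]
    [AddCommMonoid β] [PartialOrder β] [IsOrderedCancelAddMonoid β] {f : α → β}
    (hf : Antitone f) {s : Finset α} {a : α} (hs : #s = #(Ici a)) :
    ∑ x ∈ Ici a, f x ≤ ∑ x ∈ s, f x :=
  calc
    _ ≤ ∑ x ∈ Ici a ∩ s, f x + #(Ici a \ s) • f a := by
      grw [← sum_inter_add_sum_sdiff (Ici a) s, ← sum_le_card_nsmul _ _ _ fun x hx ↦ ?_]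
      exact hf (mem_Ici.1 (mem_sdiff.1 hx).1)
    _ = ∑ x ∈ s ∩ Ici a, f x + #(s \ Ici a) • f a := by
      rw [inter_comm, card_sdiff_comm hs.symm]
    _ ≤ _ := by
      grw [← sum_inter_add_sum_sdiff s (Ici a), card_nsmul_le_sum _ _ _ fun x hx ↦ ?_]
      rw [mem_sdiff, mem_Ici, not_le] at hx
      exact hf hx.2.le

theorem Antitone.sum_Ici_le_sum_comp {α β : Type*} [LinearOrder α] [LocallyFiniteOrderTop α]
    [AddCommMonoid β] [PartialOrder β] [IsOrderedCancelAddMonoid β] {f : α → β}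
    (hf : Antitone f) {a : α} {g : Ici a → α} (hg : Function.Injective g) :
    ∑ x ∈ Ici a, f x ≤ ∑ p, f (g p) := by
  classical
  rw [← sum_image fun p _ q _ h ↦ hg h]
  refine hf.sum_Ici_le_sum ?_
  rw [card_image_of_injective _ hg, card_univ, Fintype.card_coe]

theorem prod_zpow_eq_zpow_sum {G ι : Type*} [CommGroupWithZero G] {x : G} (hx : x ≠ 0)
    (s : Finset ι) (f : ι → ℤ) : ∏ i ∈ s, x ^ f i = x ^ ∑ i ∈ s, f i := by
  classical
  induction s using Finset.induction_on with
  | empty => simp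
  | insert _ _ hi ih => rw [prod_insert hi, sum_insert hi, ih, zpow_add₀ hx]

namespace Matrix

theorem det_mul_eq_sum_prod_mul_det_submatrix {R m n : Type*} [CommRing R] [DecidableEq m]
    [Fintype m] [Fintype n] (X : Matrix m n R) (Y : Matrix n m R) :
    (X * Y).det = ∑ f : m → n, (∏ p, X p (f p)) * (Y.submatrix f id).det := by
  have hrows : X * Y = of fun p ↦ ∑ k, X p k • Y k := by
    ext p q
    simp [mul_apply, Finset.sum_apply]
  rw [hrows]
  change detRowAlternating (R := R) (n := m) (fun p ↦ ∑ k, X p k • Y k) = _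
  refine ((detRowAlternating (R := R) (n := m)).toMultilinearMap.map_sum
    fun p k ↦ X p k • Y k).trans (sum_congr rfl fun f _ ↦ ?_)
  rw [(detRowAlternating (R := R) (n := m)).toMultilinearMap.map_smul_univ
    (fun p ↦ X p (f p)) (fun p ↦ Y (f p)), smul_eq_mul]
  rfl

theorem det_submatrix_map_mul_diagonal_mul_map_mem {O K m ι κ κ' : Type*} [CommRing O]
    [CommRing K] [Algebra O K] [Fintype m] [DecidableEq m] [Fintype ι] [DecidableEq ι]
    (A : Matrix κ ι O) (B : Matrix ι κ' O) (d : ι → K) (r : m → κ) (c : m → κ')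
    {I : Submodule O K} (hI : ∀ f : m → ι, Function.Injective f → ∏ p, d (f p) ∈ I) :
    ((A.map (algebraMap O K) * diagonal d * B.map (algebraMap O K)).submatrix r c).det ∈ I := by
  rw [Matrix.mul_assoc, submatrix_mul _ _ r id c Function.bijective_id,
    det_mul_eq_sum_prod_mul_det_submatrix]
  refine sum_mem fun f _ ↦ ?_
  by_cases hf : Function.Injective f
  · have hminor : ((diagonal d * B.map (algebraMap O K)).submatrix id c).submatrix f id =
        of fun p q ↦ d (f p) * (B.submatrix f c).map (algebraMap O K) p q := by
      ext p q
      simp [diagonal_mul]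
    rw [hminor, det_mul_column, ← RingHom.mapMatrix_apply, ← RingHom.map_det]
    have hA : ∏ p, (A.map (algebraMap O K)).submatrix r id p (f p) =
        algebraMap O K (∏ p, A (r p) (f p)) := by
      simp [map_prod]
    rw [hA, mul_left_comm, ← map_mul, mul_comm, ← Algebra.smul_def]
    exact I.smul_mem _ (hI f hf)
  · obtain ⟨p, q, hpq, hne⟩ := Function.not_injective_iff.mp hf
    rw [det_zero_of_row_eq hne (by ext; simp [hpq]), mul_zero]
    exact zero_mem I

theorem det_submatrix_Ici_eq_apply {R ι : Type*} [CommRing R] [LinearOrder ι]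
    [LocallyFiniteOrderTop ι] {u : Matrix ι ι R} (hu : u.IsUpperTriangular)
    (hdiag : ∀ i, u i i = 1) (i j : ι) :
    (u.submatrix (fun x : Ici j ↦ if (x : ι) = j then i else x) (↑)).det = u i j := by
  have htri :
      (u.submatrix (fun x : Ici j ↦ if (x : ι) = j then i else x) (↑)).IsUpperTriangular := by
    intro p q hqp
    have hp : (p : ι) ≠ j := ((mem_Ici.1 q.2).trans_lt hqp).ne'
    simp only [submatrix_apply, if_neg hp]
    exact hu hqp
  rw [det_of_isUpperTriangular htri, ← prod_erase_mul _ _ (mem_univ ⟨j, mem_Ici.2 le_rfl⟩)]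
  rw [prod_eq_one fun p hp ↦ ?_]
  · simp
  · have hp : (p : ι) ≠ j := fun h ↦ (ne_of_mem_erase hp) (Subtype.ext h)
    simp [if_neg hp, hdiag]

end Matrix

theorem zpow_mem_span_zpow_of_le {O K : Type*} [CommRing O] [Field K] [Algebra O K] {t : O}
    (ht : algebraMap O K t ≠ 0) {s e : ℤ} (hse : s ≤ e) :
    algebraMap O K t ^ e ∈ Submodule.span O {algebraMap O K t ^ s} := by
  refine Submodule.mem_span_singleton.2 ⟨t ^ (e - s).toNat, ?_⟩
  rw [Algebra.smul_def, map_pow, ← zpow_natCast, Int.toNat_of_nonneg (sub_nonneg.2 hse),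
    ← zpow_add₀ ht, sub_add_cancel]

theorem mem_range_algebraMap_of_mul_diagonal_zpow_eq {O K ι : Type*} [CommRing O] [Field K]
    [Algebra O K] [LinearOrder ι] [Fintype ι] [LocallyFiniteOrderTop ι] {t : O}
    (ht : algebraMap O K t ≠ 0) {μ : ι → ℤ} (hμ : Antitone μ) {u : Matrix ι ι K}
    (hu : u.IsUpperTriangular) (hdiag : ∀ i, u i i = 1) {a b : Matrix ι ι O}
    (h : u * diagonal (fun i ↦ algebraMap O K t ^ μ i) =
      a.map (algebraMap O K) * diagonal (fun i ↦ algebraMap O K t ^ μ i) *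
        b.map (algebraMap O K))
    (i j : ι) : u i j ∈ Set.range (algebraMap O K) := by
  set τ := algebraMap O K t
  set r : Ici j → ι := fun x ↦ if (x : ι) = j then i else x
  have hleft : ((u * diagonal fun i ↦ τ ^ μ i).submatrix r (↑)).det =
      u i j * τ ^ ∑ x ∈ Ici j, μ x := by
    have hcols : (u * diagonal fun i ↦ τ ^ μ i).submatrix r (↑) =
        u.submatrix r (↑) * diagonal fun x : Ici j ↦ τ ^ μ x := by
      ext
      simp [mul_diagonal]
    rw [hcols, det_mul, det_submatrix_Ici_eq_apply hu hdiag, det_diagonal,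
      prod_zpow_eq_zpow_sum ht, sum_coe_sort (Ici j) μ]
  have hright := det_submatrix_map_mul_diagonal_mul_map_mem a b (fun i ↦ τ ^ μ i) r (↑)
    (I := Submodule.span O {τ ^ ∑ x ∈ Ici j, μ x}) fun f hf ↦ by
      rw [prod_zpow_eq_zpow_sum ht]
      exact zpow_mem_span_zpow_of_le ht (hμ.sum_Ici_le_sum_comp hf)
  rw [← h, hleft] at hright
  obtain ⟨y, hy⟩ := Submodule.mem_span_singleton.1 hright
  exact ⟨y, mul_right_cancel₀ (zpow_ne_zero _ ht) ((Algebra.smul_def y _).symm.trans hy)⟩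

theorem exists_GL_map_eq_of_det_eq_one {O K ι : Type*} [CommRing O] [CommRing K] [Algebra O K]
    [Fintype ι] [DecidableEq ι] (hinj : Function.Injective (algebraMap O K))
    {u : Matrix ι ι K} (hdet : u.det = 1) (h : ∀ i j, u i j ∈ Set.range (algebraMap O K)) :
    ∃ a : GL ι O, (a : Matrix ι ι O).map (algebraMap O K) = u := by
  choose v hv using h
  have hmap : (of v).map (algebraMap O K) = u := ext hv
  have hdet' : (of v).det = 1 :=
    hinj (by rw [RingHom.map_det, RingHom.mapMatrix_apply, hmap, hdet, map_one])
  exact ⟨((isUnit_iff_isUnit_det _).2 (hdet' ▸ isUnit_one)).unit, hmap⟩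

/-- Unipotent upper-triangular matrices and affine Schubert cells: for a dominant
cocharacter `μ₁ ≥ … ≥ μₙ` and an upper-triangular unipotent `u ∈ GL_n(C((t)))`, one has
`u·t^μ ∈ GL_n(C[[t]])·t^μ·GL_n(C[[t]])` if and only if all entries of `u` lie in `C[[t]]`. -/
theorem unipotent_in_cell_iff_integral
    (C : Type*) [Field C] (n : ℕ) (μ : Fin n → ℤ) (hμ : Antitone μ)
    (u : Matrix (Fin n) (Fin n) (LaurentSeries C))
    (hdiag : ∀ i, u i i = 1)
    (hlow : ∀ i j : Fin n, j < i → u i j = 0) :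
    (∃ a b : GL (Fin n) (PowerSeries C),
        u * Matrix.diagonal (fun i =>
            (algebraMap (PowerSeries C) (LaurentSeries C) PowerSeries.X) ^ (μ i)) =
          ((a : Matrix (Fin n) (Fin n) (PowerSeries C)).map
              (algebraMap (PowerSeries C) (LaurentSeries C))) *
            Matrix.diagonal (fun i =>
              (algebraMap (PowerSeries C) (LaurentSeries C) PowerSeries.X) ^ (μ i)) *
            ((b : Matrix (Fin n) (Fin n) (PowerSeries C)).map
              (algebraMap (PowerSeries C) (LaurentSeries C)))) ↔
      ∀ i j : Fin n, u i j ∈ Set.range (algebraMap (PowerSeries C) (LaurentSeries C)) := by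
  have hinj : Function.Injective (algebraMap (PowerSeries C) (LaurentSeries C)) :=
    IsFractionRing.injective _ _
  have hu : u.IsUpperTriangular := fun i j hji ↦ hlow i j hji
  constructor
  · rintro ⟨a, b, h⟩
    exact mem_range_algebraMap_of_mul_diagonal_zpow_eq
      ((map_ne_zero_iff _ hinj).2 PowerSeries.X_ne_zero) hμ hu hdiag h
  · intro h
    obtain ⟨a, ha⟩ := exists_GL_map_eq_of_det_eq_one hinj
      (by simp [det_of_isUpperTriangular hu, hdiag]) h
    refine ⟨a, 1, ?_⟩
    rw [ha, Units.val_one, Matrix.map_one _ (map_zero _) (_root_.map_one _), mul_one]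
end

section
/- Let C be a field, K = GL_n(C[[t]]), μ = (μ_1 ≥ … ≥ μ_n) a dominant cocharacter with t^μ = diag(t^{μ_i}), and let u ∈ GL_n(C((t))) be a unipotent matrix that is upper-triangular (or more generally lies in the unipotent radical of some Borel subgroup containing the diagonal torus). If ν is the dominant cocharacter with u·t^μ ∈ K t^ν K, then μ ≤ ν in the dominance order (equal determinant, and all partial sums of ν dominate those of μ). -/
/-!
The invariant is the valuation of minors. By Cauchy–Binet, a `k × k` minor of `a t^ν b` with
`a, b` integral is a sum of terms each of valuation at least a sum of `k` distinct `ν_j`,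
hence at least `ν_{n-k+1} + ⋯ + ν_n` when `ν` is dominant. On the other side, `u` is
unitriangular for some ordering of the coordinates, so all its principal minors equal `1`, and
the principal minor of `u t^μ` on the last `k` coordinates is exactly
`t^(μ_{n-k+1} + ⋯ + μ_n)`. So every tail sum of `μ` dominates the corresponding tail sum of
`ν`; comparing determinants gives equal total sums, and subtracting tails from totals gives the
inequalities between partial sums.
-/

open Finset Matrix HahnSeries

namespace Finset

variable {α M : Type*} [AddCommMonoid M] [LinearOrder M] [IsOrderedAddMonoid M]

theorem sum_le_sum_of_card_eq_of_forall_sdiff_le [DecidableEq α] {f : α → M} {s t : Finset α}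
    (hst : #s = #t) (h : ∀ x ∈ s \ t, ∀ y ∈ t \ s, f x ≤ f y) :
    ∑ x ∈ s, f x ≤ ∑ x ∈ t, f x := by
  rcases (s \ t).eq_empty_or_nonempty with hempty | hne
  · rw [eq_of_subset_of_card_le (sdiff_eq_empty_iff_subset.mp hempty) hst.ge]
  set c := (s \ t).sup' hne f
  calc ∑ x ∈ s, f x ≤ ∑ x ∈ s ∩ t, f x + #(s \ t) • c := by
        rw [← sum_inter_add_sum_sdiff s t]
        gcongr
        exact sum_le_card_nsmul _ _ _ fun x hx => le_sup' f hx
    _ = ∑ x ∈ t ∩ s, f x + #(t \ s) • c := by rw [inter_comm, card_sdiff_comm hst]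
    _ ≤ ∑ x ∈ t, f x := by
        rw [← sum_inter_add_sum_sdiff t s]
        gcongr
        exact card_nsmul_le_sum _ _ _ fun y hy => sup'_le hne f fun x hx => h x hx y hy

end Finset

theorem Antitone.sum_le_sum_of_isUpperSet {α M : Type*} [LinearOrder α] [AddCommMonoid M]
    [LinearOrder M] [IsOrderedAddMonoid M] {f : α → M} (hf : Antitone f) {s t : Finset α}
    (hs : IsUpperSet (s : Set α)) (hst : #s = #t) :
    ∑ x ∈ s, f x ≤ ∑ x ∈ t, f x :=
  sum_le_sum_of_card_eq_of_forall_sdiff_le hst fun _ hx _ hy =>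
    hf (le_of_not_ge fun hxy => (mem_sdiff.mp hy).2 (hs hxy (mem_sdiff.mp hx).1))

theorem AddValuation.map_prod {S Γ₀ ι : Type*} [CommRing S]
    [LinearOrderedAddCommMonoidWithTop Γ₀] (v : AddValuation S Γ₀) (s : Finset ι) (f : ι → S) :
    v (∏ i ∈ s, f i) = ∑ i ∈ s, v (f i) := by
  classical
  induction s using Finset.induction_on with
  | empty => simp
  | insert a s ha ih => rw [prod_insert ha, sum_insert ha, map_mul, ih]

namespace Matrix

variable {ι κ R : Type*} [Fintype ι] [DecidableEq ι] [CommRing R]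

theorem det_mul_eq_sum_prod_mul_det_submatrix_s8 [Fintype κ] (P : Matrix ι κ R)
    (Q : Matrix κ ι R) :
    (P * Q).det = ∑ g : ι → κ, (∏ i, P i (g i)) * (Q.submatrix g id).det := by
  simp only [det_apply', mul_apply, prod_univ_sum, Fintype.piFinset_univ, mul_sum,
    submatrix_apply, id]
  conv_rhs => rw [sum_comm]
  refine sum_congr rfl fun σ _ =>
    Fintype.sum_equiv (σ.arrowCongr (Equiv.refl κ)) _ _ fun g => ?_
  rw [← Equiv.prod_comp σ fun i => P i (σ.arrowCongr (Equiv.refl κ) g i)]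
  simp only [Equiv.arrowCongr_apply, Equiv.refl_apply, Function.comp_apply,
    Equiv.symm_apply_apply, prod_mul_distrib]
  ring

theorem det_submatrix_mul_diagonal [Fintype κ] [DecidableEq κ] (M : Matrix κ κ R) (d : κ → R)
    (e e' : ι → κ) :
    ((M * diagonal d).submatrix e e').det = (M.submatrix e e').det * ∏ i, d (e' i) := by
  have : (M * diagonal d).submatrix e e' = M.submatrix e e' * diagonal (d ∘ e') := by
    ext; simp [mul_diagonal]
  rw [this, det_mul, det_diagonal, Function.comp_def]

theorem det_eq_prod_diag_of_blockTriangular_of_injective {α : Type*} [LinearOrder α]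
    {M : Matrix ι ι R} {b : ι → α} (hM : M.BlockTriangular b) (hb : Function.Injective b) :
    M.det = ∏ i, M i i := by
  let : LinearOrder ι := LinearOrder.lift' b hb
  exact det_of_isUpperTriangular hM

theorem det_submatrix_self_eq_one_of_blockTriangular {m α : Type*} [LinearOrder α]
    {M : Matrix m m R} {b : m → α} (hM : M.BlockTriangular b) (hb : Function.Injective b)
    (hdiag : ∀ i, M i i = 1) {e : ι → m} (he : Function.Injective e) :
    (M.submatrix e e).det = 1 := by
  rw [det_eq_prod_diag_of_blockTriangular_of_injective hM.submatrix (hb.comp he)]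
  exact prod_eq_one fun i _ => hdiag (e i)

end Matrix

namespace LaurentSeries

section Domain

variable {R : Type*} [CommRing R] [IsDomain R]

theorem addVal_algebraMap_nonneg (x : PowerSeries R) :
    0 ≤ addVal ℤ R (algebraMap (PowerSeries R) (LaurentSeries R) x) := by
  rw [addVal_apply, coe_algebraMap, ofPowerSeries_apply, orderTop_embDomain]
  cases (toPowerSeries.symm x).orderTop <;> simp

theorem addVal_algebraMap_of_isUnit {x : PowerSeries R} (hx : IsUnit x) :
    addVal ℤ R (algebraMap (PowerSeries R) (LaurentSeries R) x) = 0 := by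
  refine le_antisymm (addVal_le_of_coeff_ne_zero ?_) (addVal_algebraMap_nonneg x)
  rw [coe_algebraMap, ← Nat.cast_zero, ofPowerSeries_apply_coeff,
    PowerSeries.coeff_zero_eq_constantCoeff]
  exact (PowerSeries.isUnit_constantCoeff x hx).ne_zero

end Domain

variable {C : Type*} [Field C]

theorem addVal_algebraMap_X_zpow (m : ℤ) :
    addVal ℤ C (algebraMap (PowerSeries C) (LaurentSeries C) PowerSeries.X ^ m) = m := by
  rw [coe_algebraMap, ofPowerSeries_X, ← RatFunc.single_zpow, addVal_apply,
    orderTop_single one_ne_zero]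

local notation "φ" => algebraMap (PowerSeries C) (LaurentSeries C)
local notation "ϖ" => algebraMap (PowerSeries C) (LaurentSeries C) PowerSeries.X

variable {κ n : Type*} [Fintype κ] [DecidableEq κ] [Fintype n] [DecidableEq n]

theorem le_addVal_det_mul_diagonal_mul (A : Matrix κ n (PowerSeries C))
    (B : Matrix n κ (PowerSeries C)) (d : n → ℤ) {c : ℤ}
    (hc : ∀ g : κ → n, Function.Injective g → c ≤ ∑ i, d (g i)) :
    (c : WithTop ℤ) ≤
      addVal ℤ C (A.map φ * diagonal (fun i => ϖ ^ d i) * B.map φ).det := by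
  rw [det_mul_eq_sum_prod_mul_det_submatrix_s8]
  refine AddValuation.map_le_sum _ fun g _ => ?_
  by_cases hg : Function.Injective g
  · rw [AddValuation.map_mul, AddValuation.map_prod]
    calc (c : WithTop ℤ) ≤ ∑ i, (d (g i) : WithTop ℤ) := by exact_mod_cast hc g hg
      _ ≤ ∑ i, addVal ℤ C ((A.map φ * diagonal fun i => ϖ ^ d i) i (g i)) :=
          sum_le_sum fun i _ => by
            rw [mul_diagonal, map_apply, AddValuation.map_mul, addVal_algebraMap_X_zpow]
            exact le_add_of_nonneg_left (addVal_algebraMap_nonneg _)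
      _ ≤ _ := le_add_of_nonneg_right <| by
          rw [submatrix_map, ← RingHom.mapMatrix_apply, ← RingHom.map_det]
          exact addVal_algebraMap_nonneg _
  · obtain ⟨i, j, hgij, hij⟩ := Function.not_injective_iff.mp hg
    rw [det_zero_of_row_eq hij (by ext; simp [hgij]), mul_zero, AddValuation.map_zero]
    exact le_top

theorem le_addVal_det_submatrix_mul_diagonal_mul (A B : Matrix n n (PowerSeries C)) (d : n → ℤ)
    (e e' : κ → n) {c : ℤ} (hc : ∀ g : κ → n, Function.Injective g → c ≤ ∑ i, d (g i)) :
    (c : WithTop ℤ) ≤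
      addVal ℤ C ((A.map φ * diagonal (fun i => ϖ ^ d i) * B.map φ).submatrix e e').det := by
  rw [submatrix_mul _ _ e id e' Function.bijective_id,
    submatrix_mul _ _ e id id Function.bijective_id, submatrix_id_id, submatrix_map,
    submatrix_map]
  exact le_addVal_det_mul_diagonal_mul _ _ d hc

theorem addVal_det_submatrix_mul_diagonal_of_blockTriangular {α : Type*} [LinearOrder α]
    {u : Matrix n n (LaurentSeries C)} {b : n → α} (hu : u.BlockTriangular b)
    (hb : Function.Injective b) (hdiag : ∀ i, u i i = 1) (μ : n → ℤ) {e : κ → n}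
    (he : Function.Injective e) :
    addVal ℤ C ((u * diagonal fun i => ϖ ^ μ i).submatrix e e).det =
      ((∑ i, μ (e i) : ℤ) : WithTop ℤ) := by
  rw [det_submatrix_mul_diagonal,
    det_submatrix_self_eq_one_of_blockTriangular hu hb hdiag he, one_mul,
    AddValuation.map_prod, WithTop.coe_sum]
  simp only [addVal_algebraMap_X_zpow]

theorem addVal_det_mul_diagonal_mul_of_isUnit {A B : Matrix n n (PowerSeries C)}
    (hA : IsUnit A.det) (hB : IsUnit B.det) (d : n → ℤ) :
    addVal ℤ C (A.map φ * diagonal (fun i => ϖ ^ d i) * B.map φ).det =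
      ((∑ i, d i : ℤ) : WithTop ℤ) := by
  rw [det_mul, det_mul, det_diagonal, ← RingHom.mapMatrix_apply, ← RingHom.mapMatrix_apply,
    ← RingHom.map_det, ← RingHom.map_det, AddValuation.map_mul, AddValuation.map_mul,
    AddValuation.map_prod, addVal_algebraMap_of_isUnit hA, addVal_algebraMap_of_isUnit hB,
    WithTop.coe_sum]
  simp only [addVal_algebraMap_X_zpow, zero_add, add_zero]

end LaurentSeries

open LaurentSeries in
theorem dominance_of_unipotent_times_torus_general
    (C : Type*) [Field C] (n : ℕ) (μ ν : Fin n → ℤ) (hν : Antitone ν)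
    (u : Matrix (Fin n) (Fin n) (LaurentSeries C))
    (hdiag : ∀ i, u i i = 1)
    (htri : ∃ σ : Equiv.Perm (Fin n), ∀ i j : Fin n, σ.symm j < σ.symm i → u i j = 0)
    (hcell : ∃ a b : GL (Fin n) (PowerSeries C),
        u * Matrix.diagonal (fun i =>
            (algebraMap (PowerSeries C) (LaurentSeries C) PowerSeries.X) ^ (μ i)) =
          ((a : Matrix (Fin n) (Fin n) (PowerSeries C)).map
              (algebraMap (PowerSeries C) (LaurentSeries C))) *
            Matrix.diagonal (fun i =>
              (algebraMap (PowerSeries C) (LaurentSeries C) PowerSeries.X) ^ (ν i)) *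
            ((b : Matrix (Fin n) (Fin n) (PowerSeries C)).map
              (algebraMap (PowerSeries C) (LaurentSeries C)))) :
    (∀ K : ℕ,
        ∑ i ∈ Finset.univ.filter (fun i : Fin n => (i : ℕ) < K), μ i ≤
        ∑ i ∈ Finset.univ.filter (fun i : Fin n => (i : ℕ) < K), ν i) ∧
      (∑ i, μ i = ∑ i, ν i) := by
  obtain ⟨σ, htri⟩ := htri
  obtain ⟨a, b, hcell⟩ := hcell
  have hu : u.BlockTriangular σ.symm := fun i j h => htri i j h
  have htotal : ∑ i, μ i = ∑ i, ν i := by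
    have h := addVal_det_submatrix_mul_diagonal_of_blockTriangular hu σ.symm.injective hdiag μ
      Function.injective_id
    rw [submatrix_id_id, hcell, addVal_det_mul_diagonal_mul_of_isUnit
      ((isUnit_iff_isUnit_det _).mp a.isUnit) ((isUnit_iff_isUnit_det _).mp b.isUnit)] at h
    exact_mod_cast h.symm
  refine ⟨fun K => ?_, htotal⟩
  set S := univ.filter fun i : Fin n => ¬(i : ℕ) < K
  have hS : IsUpperSet (S : Set (Fin n)) := fun i j hij hi => by
    simp only [S, coe_filter, mem_univ, true_and, Set.mem_ofPred_eq] at hi ⊢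
    exact fun hj => hi (lt_of_le_of_lt (Fin.le_def.mp hij) hj)
  have htail : ∑ i ∈ S, ν i ≤ ∑ i ∈ S, μ i := by
    have h := le_addVal_det_submatrix_mul_diagonal_mul a.val b.val ν (Subtype.val : S → Fin n)
      Subtype.val (c := ∑ i ∈ S, ν i) fun g hg => by
        rw [← sum_image fun x _ y _ h => hg h]
        exact hν.sum_le_sum_of_isUpperSet hS (by rw [card_image_of_injective _ hg]; simp)
    rw [← hcell, addVal_det_submatrix_mul_diagonal_of_blockTriangular hu σ.symm.injective hdiag
      μ Subtype.val_injective, sum_coe_sort S μ] at h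
    exact_mod_cast h
  linarith [sum_filter_add_sum_filter_not univ (fun i : Fin n => (i : ℕ) < K) μ,
    sum_filter_add_sum_filter_not univ (fun i : Fin n => (i : ℕ) < K) ν]

/-- Types go up when multiplying by unipotent elements: if `u ∈ GL_n(C((t)))` is unipotent
and triangular with respect to some ordering of the coordinates (i.e. lies in the unipotent
radical of a Borel containing the diagonal torus), `μ` is dominant, and
`u·t^μ ∈ GL_n(C[[t]])·t^ν·GL_n(C[[t]])` with `ν` dominant, then `μ ≤ ν` in the dominance
order: all partial sums of `ν` dominate those of `μ`, with equal total sums. -/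
theorem dominance_of_unipotent_times_torus
    (C : Type*) [Field C] (n : ℕ) (μ ν : Fin n → ℤ) (hμ : Antitone μ) (hν : Antitone ν)
    (u : Matrix (Fin n) (Fin n) (LaurentSeries C))
    (hdiag : ∀ i, u i i = 1)
    (htri : ∃ σ : Equiv.Perm (Fin n), ∀ i j : Fin n, σ.symm j < σ.symm i → u i j = 0)
    (hcell : ∃ a b : GL (Fin n) (PowerSeries C),
        u * Matrix.diagonal (fun i =>
            (algebraMap (PowerSeries C) (LaurentSeries C) PowerSeries.X) ^ (μ i)) =
          ((a : Matrix (Fin n) (Fin n) (PowerSeries C)).map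
              (algebraMap (PowerSeries C) (LaurentSeries C))) *
            Matrix.diagonal (fun i =>
              (algebraMap (PowerSeries C) (LaurentSeries C) PowerSeries.X) ^ (ν i)) *
            ((b : Matrix (Fin n) (Fin n) (PowerSeries C)).map
              (algebraMap (PowerSeries C) (LaurentSeries C)))) :
    (∀ K : ℕ,
        ∑ i ∈ Finset.univ.filter (fun i : Fin n => (i : ℕ) < K), μ i ≤
        ∑ i ∈ Finset.univ.filter (fun i : Fin n => (i : ℕ) < K), ν i) ∧
      (∑ i, μ i = ∑ i, ν i) :=
  dominance_of_unipotent_times_torus_general C n μ ν hν u hdiag htri hcell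
end

section
/- Let C be a field and V = C^n. Let L ⊆ V ⊗_C C((t)) be a C[[t]]-lattice that is stable under the C^×-action induced by t ↦ λ t (acting C-linearly on V and by substitution on Laurent series) for every λ ∈ C^×, where C is infinite. Then there is a unique decreasing, separated, exhaustive filtration F^• of V by C-subspaces such that L = Σ_{i∈ℤ} t^{-i} C[[t]] · (F^i V). (Rees construction: equivariant lattices correspond to filtrations.) -/
/-!
Put `Fⁱ = {v | t⁻ⁱ v ∈ L}`. The lattice `Σ t⁻ⁱ C[[t]] Fⁱ` lies in `L` by construction, and for any
antitone filtration `F` the `tⁿ`-coefficient of an element of `Σ t⁻ⁱ C[[t]] Fⁱ` lies in `F⁻ⁿ`,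
which gives uniqueness. For the reverse inclusion: as `L` spans, `t^N C[[t]]^m ⊆ L` for some `N`,
so `x ∈ L` is a finite sum of monomials `tᵏ vₖ` plus an element of `t^N C[[t]]^m ⊆ L`. Scaling
by `λ` multiplies `tᵏ vₖ` by `λᵏ`, and since `C` is infinite a Vandermonde argument puts every
`tᵏ vₖ` into `L`. The filtration is separated because a finitely generated `L` has bounded-below
orders, and exhaustive because `t^N C[[t]]^m ⊆ L`.
-/

/-- The coefficient-scaling action of `λ ∈ C^×` on Laurent series, induced by `t ↦ λt`:
`(Σ aₙ tⁿ) ↦ Σ λⁿ aₙ tⁿ`. -/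
noncomputable def scaleLaurent {C : Type*} [Field C] (l : C) (f : LaurentSeries C) :
    LaurentSeries C where
  coeff := fun n => l ^ n * f.coeff n
  isPWO_support' := by
    refine f.isPWO_support'.mono ?_
    intro x hx
    simp only [Function.mem_support] at hx ⊢
    intro h
    exact hx (by rw [h, mul_zero])

instance LaurentSeries.instIsScalarTowerPowerSeries {R : Type*} [CommSemiring R] :
    IsScalarTower R (PowerSeries R) (LaurentSeries R) where
  smul_assoc c f g := by
    change HahnSeries.ofPowerSeries ℤ R (c • f) * g = c • (HahnSeries.ofPowerSeries ℤ R f * g)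
    rw [PowerSeries.smul_eq_C_mul, map_mul, HahnSeries.ofPowerSeries_C, mul_assoc,
      HahnSeries.C_mul_eq_smul]

theorem IsLocalization.exists_smul_mem_of_span_eq_top {R S N : Type*} [CommSemiring R]
    [CommSemiring S] [Algebra R S] (M : Submonoid R) [IsLocalization M S] [AddCommMonoid N]
    [Module R N] [Module S N] [IsScalarTower R S N] (L : Submodule R N)
    (hL : Submodule.span S (L : Set N) = ⊤) (x : N) : ∃ m : M, (m : R) • x ∈ L := by
  obtain ⟨y, hy, m, rfl⟩ := (mem_span_iff M).1 (hL ▸ Submodule.mem_top : x ∈ Submodule.span S L)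
  refine ⟨m, ?_⟩
  rwa [← algebraMap_smul S, smul_smul, mk'_spec', map_one, one_smul, ← Submodule.span_eq L]

theorem Submodule.mem_of_forall_sum_pow_smul_mem {K E : Type*} [Field K] [Infinite K]
    [AddCommGroup E] [Module K E] (W : Submodule K E) (s : Finset ℕ) (u : ℕ → E)
    (h : ∀ l : K, l ≠ 0 → ∑ i ∈ s, l ^ i • u i ∈ W) {i : ℕ} (hi : i ∈ s) : u i ∈ W := by
  -- A functional detecting `u i` modulo `W` turns the hypothesis into a polynomial with
  -- infinitely many roots whose `i`-th coefficient is nonzero.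
  rw [← Quotient.mk_eq_zero]
  by_contra hne
  obtain ⟨φ, hφ⟩ := Module.Projective.exists_dual_ne_zero K hne
  set p : Polynomial K := ∑ k ∈ s, Polynomial.monomial k (φ (W.mkQ (u k)))
  have hroots : ({0}ᶜ : Set K) ⊆ {l | p.IsRoot l} := fun l hl => by
    have : φ (W.mkQ (∑ i ∈ s, l ^ i • u i)) = 0 := by
      rw [mkQ_apply, (Quotient.mk_eq_zero W).2 (h l hl), map_zero]
    simpa [p, Polynomial.eval_finsetSum, mul_comm] using this
  have hp : p = 0 := Polynomial.eq_zero_of_infinite_isRoot p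
    ((Set.finite_singleton 0).infinite_compl.mono hroots)
  apply hφ
  simpa [p, Polynomial.finsetSum_coeff, Polynomial.coeff_monomial, hi] using
    congrArg (Polynomial.coeff · i) hp

namespace ReesLattice

open Submodule

variable {C ι : Type*} [Field C]

noncomputable def monomialVec (n : ℤ) : (ι → C) →ₗ[C] (ι → LaurentSeries C) :=
  LinearMap.compLeft (HahnSeries.single.linearMap n) ι

noncomputable def coeffVec (n : ℤ) : (ι → LaurentSeries C) →ₗ[C] (ι → C) :=
  LinearMap.compLeft (HahnSeries.coeff.linearMap n) ι

@[simp]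
theorem monomialVec_apply (n : ℤ) (v : ι → C) (j : ι) :
    monomialVec n v j = HahnSeries.single n (v j) :=
  rfl

@[simp]
theorem coeffVec_apply (n : ℤ) (x : ι → LaurentSeries C) (j : ι) :
    coeffVec n x j = (x j).coeff n :=
  rfl

@[simp]
theorem powerSeries_smul_apply (f : PowerSeries C) (x : ι → LaurentSeries C) (j : ι) :
    (f • x) j = (f : LaurentSeries C) * x j :=
  rfl

theorem coeffVec_monomialVec (n k : ℤ) (v : ι → C) :
    coeffVec n (monomialVec k v) = if n = k then v else 0 := by
  ext j
  simp only [coeffVec_apply, monomialVec_apply, HahnSeries.coeff_single]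
  split_ifs <;> rfl

theorem coeffVec_smul_monomialVec (f : PowerSeries C) (n k : ℤ) (v : ι → C) :
    coeffVec n (f • monomialVec k v) = (f : LaurentSeries C).coeff (n - k) • v := by
  ext j
  rw [coeffVec_apply, powerSeries_smul_apply, monomialVec_apply, ← sub_add_cancel n k,
    HahnSeries.coeff_mul_single_add, add_sub_cancel_right]
  rfl

theorem X_pow_smul_monomialVec (a : ℕ) (k : ℤ) (v : ι → C) :
    (PowerSeries.X ^ a : PowerSeries C) • monomialVec k v = monomialVec (a + k) v := by
  ext j : 1
  rw [powerSeries_smul_apply, monomialVec_apply, monomialVec_apply,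
    HahnSeries.ofPowerSeries_X_pow, HahnSeries.single_mul_single, one_mul]

noncomputable def scaleVec (l : C) : (ι → LaurentSeries C) →+ (ι → LaurentSeries C) where
  toFun x j := scaleLaurent l (x j)
  map_zero' := by ext; simp [scaleLaurent]
  map_add' x y := by ext; simp [scaleLaurent, mul_add]

theorem scaleVec_monomialVec (l : C) (n : ℤ) (v : ι → C) :
    scaleVec l (monomialVec n v) = l ^ n • monomialVec n v := by
  ext j k
  change l ^ k * (HahnSeries.single n (v j)).coeff k = _
  simp only [Pi.smul_apply, HahnSeries.coeff_smul, monomialVec_apply, HahnSeries.coeff_single]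
  split_ifs with h
  · rw [h, smul_eq_mul]
  · simp

/-- The lattice `t^b C[[t]]^ι`. -/
def vanishingBelow (b : ℤ) : Submodule (PowerSeries C) (ι → LaurentSeries C) where
  carrier := {x | ∀ k < b, coeffVec k x = 0}
  add_mem' hx hy k hk := by rw [map_add, hx k hk, hy k hk, add_zero]
  zero_mem' k _ := map_zero _
  smul_mem' f x hx k hk := by
    ext j
    rw [coeffVec_apply, powerSeries_smul_apply, HahnSeries.coeff_mul, Pi.zero_apply]
    refine Finset.sum_eq_zero fun p hp => ?_
    obtain ⟨hf, hxj, hpk⟩ := Finset.mem_antidiagonal.1 hp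
    have hp₁ : 0 ≤ p.1 := by
      by_contra hneg
      exact hf (by rw [PowerSeries.coeff_coe, if_pos (by omega)])
    have hp₂ : b ≤ p.2 := by
      by_contra hlt
      exact hxj (congrFun (hx p.2 (by omega)) j)
    omega

theorem exists_le_vanishingBelow [Finite ι] {M : Submodule (PowerSeries C) (ι → LaurentSeries C)}
    (hM : M.FG) : ∃ b, M ≤ vanishingBelow b := by
  obtain ⟨t, rfl⟩ := hM
  obtain ⟨b, hb⟩ := Finite.exists_ge fun p : t × ι => (p.1.1 p.2).order
  refine ⟨b, span_le.2 fun x hx k hk => funext fun j => ?_⟩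
  exact HahnSeries.coeff_eq_zero_of_lt_order (hk.trans_le (hb (⟨x, hx⟩, j)))

theorem vanishingBelow_le_span_range_monomialVec [Fintype ι] [DecidableEq ι] (b : ℤ) :
    vanishingBelow b ≤ span (PowerSeries C) (Set.range (monomialVec (ι := ι) b)) := by
  intro x hx
  have hsum : x = ∑ j, PowerSeries.mk (fun a => (x j).coeff (b + a)) •
      monomialVec b (Pi.single j 1) := by
    ext j k
    rw [Finset.sum_apply, Finset.sum_eq_single_of_mem j (Finset.mem_univ j) fun i _ hij => by
      simp [Ne.symm hij]]
    rw [powerSeries_smul_apply, monomialVec_apply, Pi.single_eq_same, ← sub_add_cancel k b,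
      HahnSeries.coeff_mul_single_add, mul_one, PowerSeries.coeff_coe]
    split_ifs with hkb
    · exact congrFun (hx _ (by omega)) j
    · rw [PowerSeries.coeff_mk]
      congr 1
      omega
  rw [hsum]
  exact sum_mem fun j _ => smul_mem _ _ (subset_span ⟨_, rfl⟩)

theorem vanishingBelow_antitone : Antitone (vanishingBelow (C := C) (ι := ι)) :=
  fun _ _ h _ hx k hk => hx k (hk.trans_le h)

theorem sub_sum_monomialVec_coeffVec_mem_vanishingBelow {b : ℤ} {x : ι → LaurentSeries C}
    (hx : x ∈ vanishingBelow b) (d : ℕ) :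
    x - ∑ k ∈ Finset.range d, monomialVec (b + k) (coeffVec (b + k) x) ∈
      vanishingBelow (b + d) := by
  intro n hn
  simp_rw [map_sub, map_sum, coeffVec_monomialVec, sub_eq_zero]
  by_cases hnb : n < b
  · rw [hx n hnb, Finset.sum_eq_zero fun k _ => if_neg (by omega)]
  · rw [Finset.sum_eq_single_of_mem (n - b).toNat (Finset.mem_range.2 (by omega))
      fun k _ hk => if_neg (by omega), if_pos (by omega),
      show b + ((n - b).toNat : ℤ) = n by omega]

section Filtration

variable (L : Submodule (PowerSeries C) (ι → LaurentSeries C))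

noncomputable def filtrationOf (i : ℤ) : Submodule C (ι → C) :=
  (L.restrictScalars C).comap (monomialVec (-i))

theorem mem_filtrationOf {i : ℤ} {v : ι → C} : v ∈ filtrationOf L i ↔ monomialVec (-i) v ∈ L :=
  Iff.rfl

noncomputable def reesLattice (F : ℤ → Submodule C (ι → C)) :
    Submodule (PowerSeries C) (ι → LaurentSeries C) :=
  ⨆ i, span (PowerSeries C) {x | ∃ v ∈ F i, x = monomialVec (-i) v}

theorem monomialVec_mem_reesLattice {F : ℤ → Submodule C (ι → C)} {i : ℤ} {v : ι → C}
    (hv : v ∈ F i) : monomialVec (-i) v ∈ reesLattice F :=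
  mem_iSup_of_mem i (subset_span ⟨v, hv, rfl⟩)

theorem coeffVec_mem_of_mem_reesLattice {F : ℤ → Submodule C (ι → C)} (hF : Antitone F)
    {x : ι → LaurentSeries C} (hx : x ∈ reesLattice F) (n : ℤ) : coeffVec n x ∈ F (-n) := by
  rw [reesLattice, ← span_iUnion, mem_span_set'] at hx
  obtain ⟨r, f, g, rfl⟩ := hx
  rw [map_sum]
  refine sum_mem fun l _ => ?_
  obtain ⟨i, v, hv, hg⟩ := Set.mem_iUnion.1 (g l).2
  rw [hg, coeffVec_smul_monomialVec, PowerSeries.coeff_coe]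
  split_ifs with hni
  · rw [zero_smul]
    exact zero_mem _
  · exact smul_mem _ _ (hF (by omega) hv)

theorem filtrationOf_reesLattice {F : ℤ → Submodule C (ι → C)} (hF : Antitone F) :
    filtrationOf (reesLattice F) = F := by
  ext i v
  refine ⟨fun hv => ?_, monomialVec_mem_reesLattice⟩
  simpa [coeffVec_monomialVec] using coeffVec_mem_of_mem_reesLattice hF hv (-i)

theorem antitone_filtrationOf : Antitone (filtrationOf L) := by
  refine antitone_int_of_succ_le fun i v hv => ?_
  have := L.smul_mem (PowerSeries.X ^ 1) hv
  rwa [X_pow_smul_monomialVec, show ((1 : ℕ) : ℤ) + -(i + 1) = -i by omega] at this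

theorem iInf_filtrationOf_eq_bot [Finite ι] (hL : L.FG) : ⨅ i, filtrationOf L i = ⊥ := by
  obtain ⟨b, hb⟩ := exists_le_vanishingBelow hL
  refine eq_bot_iff.2 fun v hv => ?_
  have hmem : monomialVec (b - 1) v ∈ L := by
    simpa only [mem_filtrationOf, neg_sub] using (mem_iInf _).1 hv (1 - b)
  simpa [coeffVec_monomialVec] using hb hmem (b - 1) (by omega)

theorem exists_filtrationOf_eq_top [Finite ι]
    (hspan : span (LaurentSeries C) (L : Set (ι → LaurentSeries C)) = ⊤) :
    ∃ i, filtrationOf L i = ⊤ := by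
  classical
  have hbasis (j : ι) : ∃ i, Pi.single j 1 ∈ filtrationOf L i := by
    obtain ⟨⟨_, n, rfl⟩, hn⟩ := IsLocalization.exists_smul_mem_of_span_eq_top
      (Submonoid.powers PowerSeries.X) L hspan (monomialVec 0 (Pi.single j 1))
    refine ⟨-n, ?_⟩
    rwa [mem_filtrationOf, neg_neg, ← add_zero (n : ℤ), ← X_pow_smul_monomialVec]
  choose i hi using hbasis
  obtain ⟨i₀, hi₀⟩ := Finite.exists_ge i
  refine ⟨i₀, eq_top_iff.2 ?_⟩
  rw [← (Pi.basisFun C ι).span_eq, span_le]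
  rintro _ ⟨j, rfl⟩
  rw [Pi.basisFun_apply]
  exact antitone_filtrationOf L (hi₀ j) (hi j)

theorem iSup_filtrationOf_eq_top [Finite ι]
    (hspan : span (LaurentSeries C) (L : Set (ι → LaurentSeries C)) = ⊤) :
    ⨆ i, filtrationOf L i = ⊤ :=
  let ⟨i, hi⟩ := exists_filtrationOf_eq_top L hspan
  eq_top_iff.2 (hi ▸ le_iSup _ i)

theorem monomialVec_mem_reesLattice_filtrationOf {n : ℤ} {v : ι → C}
    (hv : monomialVec n v ∈ L) : monomialVec n v ∈ reesLattice (filtrationOf L) := by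
  simpa using monomialVec_mem_reesLattice (F := filtrationOf L) (i := -n)
    (by rwa [mem_filtrationOf, neg_neg])

theorem monomialVec_mem_of_sum_mem [Infinite C]
    (hstab : ∀ l : C, l ≠ 0 → ∀ x ∈ L, scaleVec l x ∈ L) (b : ℤ) (s : Finset ℕ)
    (c : ℕ → ι → C) (hsum : ∑ k ∈ s, monomialVec (b + k) (c k) ∈ L) {k : ℕ} (hk : k ∈ s) :
    monomialVec (b + k) (c k) ∈ L := by
  refine (L.restrictScalars C).mem_of_forall_sum_pow_smul_mem s
    (fun k => monomialVec (b + k) (c k)) (fun l hl => ?_) hk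
  have hterm (i : ℕ) : l ^ (-b) • scaleVec l (monomialVec (b + i) (c i)) =
      l ^ i • monomialVec (b + i) (c i) := by
    rw [scaleVec_monomialVec, smul_smul, ← zpow_add₀ hl, neg_add_cancel_left, zpow_natCast]
  simpa only [map_sum, Finset.smul_sum, hterm, restrictScalars_mem] using
    L.smul_of_tower_mem (l ^ (-b)) (hstab l hl _ hsum)

theorem reesLattice_filtrationOf [Infinite C] [Finite ι]
    (hspan : span (LaurentSeries C) (L : Set (ι → LaurentSeries C)) = ⊤)
    (hstab : ∀ l : C, l ≠ 0 → ∀ x ∈ L, scaleVec l x ∈ L) :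
    reesLattice (filtrationOf L) = L := by
  classical
  have := Fintype.ofFinite ι
  refine le_antisymm (iSup_le fun i => span_le.2 ?_) fun x hx => ?_
  · rintro _ ⟨v, hv, rfl⟩
    exact hv
  obtain ⟨N, hN⟩ := exists_filtrationOf_eq_top L hspan
  obtain ⟨b, hb⟩ := exists_le_vanishingBelow (fg_span_singleton x)
  set head := ∑ k ∈ Finset.range (-N - b).toNat, monomialVec (b + k) (coeffVec (b + k) x)
  have htail : span (PowerSeries C) (Set.range (monomialVec (-N))) ≤
      L ⊓ reesLattice (filtrationOf L) := by
    rw [span_le]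
    rintro _ ⟨v, rfl⟩
    have hv : monomialVec (-N) v ∈ L := by
      rw [← mem_filtrationOf, hN]
      trivial
    exact ⟨hv, monomialVec_mem_reesLattice_filtrationOf L hv⟩
  have hz := htail <| vanishingBelow_le_span_range_monomialVec (-N) <|
    vanishingBelow_antitone (by omega) <|
      sub_sum_monomialVec_coeffVec_mem_vanishingBelow (hb (mem_span_singleton_self x))
        (-N - b).toNat
  have hhead : head ∈ L := by simpa using L.sub_mem hx hz.1
  rw [← sub_add_cancel x head]
  exact add_mem hz.2 <| sum_mem fun k hk => monomialVec_mem_reesLattice_filtrationOf L <|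
    monomialVec_mem_of_sum_mem L hstab b _ _ hhead hk

end Filtration

end ReesLattice

open ReesLattice in
/-- Rees construction: a `C[[t]]`-lattice `L` in `Cⁿ ⊗ C((t))` that is stable under the
scaling action `t ↦ λt` for every `λ ∈ C^×` (`C` infinite) comes from a unique decreasing,
separated, exhaustive filtration `F` of `Cⁿ` by subspaces, via
`L = Σ_{i∈ℤ} t⁻ⁱ C[[t]] · (FⁱV)`. -/
theorem equivariant_lattice_comes_from_filtration
    (C : Type*) [Field C] [Infinite C] (m : ℕ)
    (L : Submodule (PowerSeries C) (Fin m → LaurentSeries C))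
    (hFG : L.FG)
    (hspan : Submodule.span (LaurentSeries C) (L : Set (Fin m → LaurentSeries C)) = ⊤)
    (hstab : ∀ l : C, l ≠ 0 → ∀ x ∈ L, (fun i => scaleLaurent l (x i)) ∈ L) :
    ∃! F : ℤ → Submodule C (Fin m → C),
      ((∀ i, F (i + 1) ≤ F i) ∧ (⨅ i, F i) = ⊥ ∧ (⨆ i, F i) = ⊤) ∧
        L = ⨆ i : ℤ, Submodule.span (PowerSeries C)
          {x : Fin m → LaurentSeries C |
            ∃ v ∈ F i, x = fun j => HahnSeries.single (-i) (v j)} := by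
  refine ⟨filtrationOf L, ⟨⟨fun i => antitone_filtrationOf L (by omega),
    iInf_filtrationOf_eq_bot L hFG, iSup_filtrationOf_eq_top L hspan⟩,
    (reesLattice_filtrationOf L hspan hstab).symm⟩, ?_⟩
  rintro F ⟨⟨hF, -, -⟩, rfl⟩
  exact (filtrationOf_reesLattice (antitone_int_of_succ_le hF)).symm
end

section
/- Let R be a DVR with uniformizer t and fraction field B. For bilatticed vector spaces V = (B^n, 𝓛_1, 𝓛_2) define ord(V) to be the smallest integer i such that t^i 𝓛_1 ⊆ 𝓛_2; if V has type (ν_1 ≥ … ≥ ν_n) then ord(V) = ν_1. Moreover, ord is additive under tensor product: for bilatticed spaces V and W, ord(V ⊗ W) = ord(V) + ord(W), where V ⊗ W carries the tensor product lattices 𝓛_i(V) ⊗_R 𝓛_i(W). -/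
/-! In a basis `b` adapted to the pair, `tᵏ𝓛₁ ⊆ 𝓛₂` holds as soon as `k ≥ νᵢ` for every `i`,
coordinate by coordinate. Conversely the `i₀`-th coordinate of `tᵏ b_{i₀}` is `tᵏ`, while every
vector of `𝓛₂` has `i₀`-th coordinate in `t^{ν_{i₀}} R`, and `tᵏ ∈ t^{ν_{i₀}} R` forces
`k ≥ ν_{i₀}` because `t` is not a unit. So the order is the largest entry of the type. The tensor
product of adapted bases is adapted to the tensor product lattices, with type `νᵢ + ρⱼ`, whose
largest entry is `ν₁ + ρ₁`. -/

open TensorProduct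

section ZPow

variable {R B : Type*} [CommRing R] [Field B] [Algebra R B]

lemma algebraMap_zpow_eq_pow_toNat_sub_mul {t : R} (ht₀ : algebraMap R B t ≠ 0) {i j : ℤ}
    (hij : j ≤ i) :
    algebraMap R B t ^ i = algebraMap R B (t ^ (i - j).toNat) * algebraMap R B t ^ j := by
  rw [map_pow, ← zpow_natCast, Int.toNat_of_nonneg (sub_nonneg.2 hij), ← zpow_add₀ ht₀,
    sub_add_cancel]

lemma le_of_algebraMap_zpow_mem_span_zpow {t : R} (ht : ¬IsUnit t) (ht₀ : t ≠ 0)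
    (hinj : Function.Injective (algebraMap R B)) {i j : ℤ}
    (h : algebraMap R B t ^ i ∈ Submodule.span R {algebraMap R B t ^ j}) : j ≤ i := by
  have hπ : algebraMap R B t ≠ 0 := (map_ne_zero_iff _ hinj).2 ht₀
  by_contra! hij
  obtain ⟨r, hr⟩ := Submodule.mem_span_singleton.1 h
  rw [Algebra.smul_def, algebraMap_zpow_eq_pow_toNat_sub_mul hπ hij.le, ← mul_assoc,
    mul_eq_right₀ (zpow_ne_zero _ hπ), ← map_mul, ← map_one (algebraMap R B)] at hr
  have hk : (j - i).toNat ≠ 0 := by omega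
  exact ht (isUnit_of_dvd_one (hinj hr ▸ (dvd_pow_self t hk).mul_left r))

end ZPow

section Basis

variable {R B W : Type*} [CommRing R] [Field B] [Algebra R B]
    [AddCommGroup W] [Module B W] [Module R W] [IsScalarTower R B W]
    {ι : Type*} (b : Module.Basis ι B W) (t : R) (μ : ι → ℤ)

lemma zpow_smul_mem_span_zpow_smul_basis (ht₀ : algebraMap R B t ≠ 0) {k : ℤ}
    (hk : ∀ i, μ i ≤ k) {x : W} (hx : x ∈ Submodule.span R (Set.range b)) :
    algebraMap R B t ^ k • x ∈
      Submodule.span R (Set.range fun i => algebraMap R B t ^ μ i • b i) := by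
  suffices h : Submodule.span R (Set.range b) ≤ (Submodule.span R _).comap
      (DistribSMul.toLinearMap R W (algebraMap R B t ^ k)) from h hx
  rw [Submodule.span_le]
  rintro _ ⟨i, rfl⟩
  have : algebraMap R B t ^ k • b i =
      t ^ (k - μ i).toNat • algebraMap R B t ^ μ i • b i := by
    rw [algebraMap_zpow_eq_pow_toNat_sub_mul ht₀ (hk i), mul_smul, algebraMap_smul]
  rw [SetLike.mem_coe, Submodule.mem_comap, DistribSMul.toLinearMap_apply, this]
  exact Submodule.smul_mem _ _ (Submodule.subset_span ⟨i, rfl⟩)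

lemma coord_mem_span_of_mem_span_zpow_smul_basis (i₀ : ι) {y : W}
    (hy : y ∈ Submodule.span R (Set.range fun i => algebraMap R B t ^ μ i • b i)) :
    b.coord i₀ y ∈ Submodule.span R {algebraMap R B t ^ μ i₀} := by
  suffices h : Submodule.span R _ ≤ (Submodule.span R _).comap
      ((b.coord i₀).restrictScalars R) from h hy
  rw [Submodule.span_le]
  rintro _ ⟨i, rfl⟩
  by_cases hi : i = i₀
  · subst hi
    simp
  · simp [hi]

theorem isLeast_zpow_smul_span_basis (ht : ¬IsUnit t) (ht₀ : t ≠ 0)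
    (hinj : Function.Injective (algebraMap R B)) (i₀ : ι) (hmax : ∀ i, μ i ≤ μ i₀) :
    IsLeast {k : ℤ | ∀ x ∈ Submodule.span R (Set.range b), algebraMap R B t ^ k • x ∈
      Submodule.span R (Set.range fun i => algebraMap R B t ^ μ i • b i)} (μ i₀) := by
  refine ⟨fun x hx => zpow_smul_mem_span_zpow_smul_basis b t μ
    ((map_ne_zero_iff _ hinj).2 ht₀) hmax hx, fun k hk => ?_⟩
  have := coord_mem_span_of_mem_span_zpow_smul_basis b t μ i₀
    (hk (b i₀) (Submodule.subset_span ⟨i₀, rfl⟩))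
  simp only [map_smul, Module.Basis.coord_apply, Module.Basis.repr_self, Finsupp.single_eq_same,
    smul_eq_mul, mul_one] at this
  exact le_of_algebraMap_zpow_mem_span_zpow ht ht₀ hinj this

end Basis

section TensorProduct

variable {R B W₁ W₂ : Type*} [CommRing R] [Field B] [Algebra R B]
    [AddCommGroup W₁] [Module B W₁] [Module R W₁] [IsScalarTower R B W₁]
    [SMulCommClass B R W₁]
    [AddCommGroup W₂] [Module B W₂] [Module R W₂] [IsScalarTower R B W₂]

lemma span_tmul_span_eq_span_image2 (S : Set W₁) (T : Set W₂) :
    Submodule.span R {x : W₁ ⊗[B] W₂ |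
        ∃ a ∈ Submodule.span R S, ∃ c ∈ Submodule.span R T, x = a ⊗ₜ[B] c} =
      Submodule.span R (Set.image2 (fun a c => a ⊗ₜ[B] c) S T) := by
  let f : W₁ →ₗ[R] W₂ →ₗ[R] W₁ ⊗[B] W₂ := LinearMap.mk₂ R (fun a c => a ⊗ₜ[B] c) add_tmul
    (fun r a c => (smul_tmul' r a c).symm) tmul_add (fun r a c => by simp)
  have hset : {x : W₁ ⊗[B] W₂ | ∃ a ∈ Submodule.span R S, ∃ c ∈ Submodule.span R T,
      x = a ⊗ₜ[B] c} =
      Set.image2 (fun a c => f a c) (Submodule.span R S) (Submodule.span R T) := by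
    ext x
    simp [Set.mem_image2, eq_comm, f]
  rw [hset, ← Submodule.map₂_eq_span_image2, Submodule.map₂_span_span]
  rfl

end TensorProduct

theorem ord_eq_top_type_and_additive_general
    {R B W₁ W₂ : Type*} [CommRing R]
    [Field B] [Algebra R B] [IsFractionRing R B]
    [AddCommGroup W₁] [Module B W₁] [Module R W₁] [IsScalarTower R B W₁]
    [SMulCommClass B R W₁]
    [AddCommGroup W₂] [Module B W₂] [Module R W₂] [IsScalarTower R B W₂]
    (t : R) (ht : Irreducible t)
    {n m : ℕ} (hn : 0 < n) (hm : 0 < m)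
    (ν : Fin n → ℤ) (ρ : Fin m → ℤ) (hν : Antitone ν) (hρ : Antitone ρ)
    (A₁ A₂ : Submodule R W₁) (C₁ C₂ : Submodule R W₂)
    (hA : LatticePairHasType (B := B) t ν A₁ A₂)
    (hC : LatticePairHasType (B := B) t ρ C₁ C₂) :
    IsLeast {i : ℤ | ∀ x ∈ A₁, ((algebraMap R B t) ^ i) • x ∈ A₂} (ν ⟨0, hn⟩) ∧
    IsLeast {i : ℤ | ∀ x ∈ C₁, ((algebraMap R B t) ^ i) • x ∈ C₂} (ρ ⟨0, hm⟩) ∧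
    IsLeast {i : ℤ | ∀ x ∈ Submodule.span R
          {x : W₁ ⊗[B] W₂ | ∃ a ∈ A₁, ∃ c ∈ C₁, x = a ⊗ₜ[B] c},
        ((algebraMap R B t) ^ i) • x ∈ Submodule.span R
          {x : W₁ ⊗[B] W₂ | ∃ a ∈ A₂, ∃ c ∈ C₂, x = a ⊗ₜ[B] c}}
      (ν ⟨0, hn⟩ + ρ ⟨0, hm⟩) := by
  obtain ⟨b, rfl, rfl⟩ := hA
  obtain ⟨c, rfl, rfl⟩ := hC
  have hinj := IsFractionRing.injective R B
  have hπ : algebraMap R B t ≠ 0 := (map_ne_zero_iff _ hinj).2 ht.ne_zero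
  have hνmax : ∀ i, ν i ≤ ν ⟨0, hn⟩ := fun i => hν (Nat.zero_le i.val)
  have hρmax : ∀ j, ρ j ≤ ρ ⟨0, hm⟩ := fun j => hρ (Nat.zero_le j.val)
  have hbc : (fun p : Fin n × Fin m => b p.1 ⊗ₜ[B] c p.2) = b.tensorProduct c :=
    funext fun p => (b.tensorProduct_apply' c p).symm
  have hbc_twisted : (fun p : Fin n × Fin m =>
      (algebraMap R B t ^ ν p.1 • b p.1) ⊗ₜ[B] (algebraMap R B t ^ ρ p.2 • c p.2)) =
      fun p => algebraMap R B t ^ (ν p.1 + ρ p.2) • b.tensorProduct c p :=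
    funext fun p => by rw [b.tensorProduct_apply', smul_tmul_smul, zpow_add₀ hπ]
  refine ⟨isLeast_zpow_smul_span_basis b t ν ht.not_isUnit ht.ne_zero hinj _ hνmax,
    isLeast_zpow_smul_span_basis c t ρ ht.not_isUnit ht.ne_zero hinj _ hρmax, ?_⟩
  rw [span_tmul_span_eq_span_image2, span_tmul_span_eq_span_image2, Set.image2_range,
    Set.image2_range, hbc, hbc_twisted]
  exact isLeast_zpow_smul_span_basis (b.tensorProduct c) t _ ht.not_isUnit ht.ne_zero hinj
    (⟨0, hn⟩, ⟨0, hm⟩) fun p => add_le_add (hνmax p.1) (hρmax p.2)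

/-- The order of a bilatticed vector space of type `(ν₁ ≥ … ≥ νₙ)` — the least `i` with
`tⁱ𝓛₁ ⊆ 𝓛₂` — equals `ν₁`; and the order is additive under tensor products: for bilatticed
spaces `V = (W₁, A₁, A₂)` of type `ν` and `W = (W₂, C₁, C₂)` of type `ρ`, the order of
`V ⊗ W` (with the tensor product lattices) is `ν₁ + ρ₁`. -/
theorem ord_eq_top_type_and_additive
    {R B W₁ W₂ : Type*} [CommRing R] [IsDomain R] [IsDiscreteValuationRing R]
    [Field B] [Algebra R B] [IsFractionRing R B]
    [AddCommGroup W₁] [Module B W₁] [Module R W₁] [IsScalarTower R B W₁]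
    [SMulCommClass B R W₁]
    [AddCommGroup W₂] [Module B W₂] [Module R W₂] [IsScalarTower R B W₂]
    (t : R) (ht : Irreducible t)
    {n m : ℕ} (hn : 0 < n) (hm : 0 < m)
    (ν : Fin n → ℤ) (ρ : Fin m → ℤ) (hν : Antitone ν) (hρ : Antitone ρ)
    (A₁ A₂ : Submodule R W₁) (C₁ C₂ : Submodule R W₂)
    (hA : LatticePairHasType (B := B) t ν A₁ A₂)
    (hC : LatticePairHasType (B := B) t ρ C₁ C₂) :
    IsLeast {i : ℤ | ∀ x ∈ A₁, ((algebraMap R B t) ^ i) • x ∈ A₂} (ν ⟨0, hn⟩) ∧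
    IsLeast {i : ℤ | ∀ x ∈ C₁, ((algebraMap R B t) ^ i) • x ∈ C₂} (ρ ⟨0, hm⟩) ∧
    IsLeast {i : ℤ | ∀ x ∈ Submodule.span R
          {x : W₁ ⊗[B] W₂ | ∃ a ∈ A₁, ∃ c ∈ C₁, x = a ⊗ₜ[B] c},
        ((algebraMap R B t) ^ i) • x ∈ Submodule.span R
          {x : W₁ ⊗[B] W₂ | ∃ a ∈ A₂, ∃ c ∈ C₂, x = a ⊗ₜ[B] c}}
      (ν ⟨0, hn⟩ + ρ ⟨0, hm⟩) :=
  ord_eq_top_type_and_additive_general t ht hn hm ν ρ hν hρ A₁ A₂ C₁ C₂ hA hC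
end
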